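/- arXiv:2410.05580 — 2 statements merged into one kernel-verified Lean document; each statement's English description precedes it below -/
import Mathlib

section
/- There exists a finite planar point set S (with |S| ≥ 4, no three points collinear) such that no maximum-length Hamiltonian cycle on S contains an edge between a diametric pair of S (a pair of points at maximum pairwise distance). -/
open scoped Classical

/-- A point in the Euclidean plane. -/
abbrev Pt := EuclideanSpace ℝ (Fin 2)

/-- Euclidean length of a Hamiltonian cycle through a list of planar points:
sum of distances over consecutive pairs including the wrap-around pair. -/
noncomputable def ecycleLen (l : List Pt) : ℝ :=
  ((l.zip (l.rotate 1)).map fun p => dist p.1 p.2).sum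

/-- A Hamiltonian (spanning) cycle on a finite planar point set `S`. -/
def IsHamCycleOn (S : Finset Pt) (l : List Pt) : Prop :=
  l.Nodup ∧ l.toFinset = S

noncomputable def pA : Pt := WithLp.toLp 2 ![(-2:ℝ), 0]
noncomputable def pB : Pt := WithLp.toLp 2 ![(0:ℝ), 2]
noncomputable def pC : Pt := WithLp.toLp 2 ![(2:ℝ), 0]
noncomputable def pD : Pt := WithLp.toLp 2 ![(0:ℝ), 3]

lemma pA0 : pA 0 = -2 := rfl
lemma pA1 : pA 1 = 0 := rfl
lemma pB0 : pB 0 = 0 := rfl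
lemma pB1 : pB 1 = 2 := rfl
lemma pC0 : pC 0 = 2 := rfl
lemma pC1 : pC 1 = 0 := rfl
lemma pD0 : pD 0 = 0 := rfl
lemma pD1 : pD 1 = 3 := rfl

lemma dAB : dist pA pB = Real.sqrt 8 := by
  rw [EuclideanSpace.dist_eq, Fin.sum_univ_two]; norm_num [pA, pB]
lemma dBC : dist pB pC = Real.sqrt 8 := by
  rw [EuclideanSpace.dist_eq, Fin.sum_univ_two]; norm_num [pB, pC]
lemma dCD : dist pC pD = Real.sqrt 13 := by
  rw [EuclideanSpace.dist_eq, Fin.sum_univ_two]; norm_num [pC, pD]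
lemma dAD : dist pA pD = Real.sqrt 13 := by
  rw [EuclideanSpace.dist_eq, Fin.sum_univ_two]; norm_num [pA, pD]
lemma dAC : dist pA pC = 4 := by
  rw [EuclideanSpace.dist_eq, Fin.sum_univ_two, pA0, pA1, pC0, pC1]
  rw [show dist (-2:ℝ) 2 ^ 2 + dist (0:ℝ) 0 ^ 2 = 4^2 by
    rw [Real.dist_eq, Real.dist_eq]; norm_num]
  exact Real.sqrt_sq (by norm_num)
lemma dBD : dist pB pD = 1 := by
  rw [EuclideanSpace.dist_eq, Fin.sum_univ_two, pB0, pB1, pD0, pD1]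
  rw [show dist (0:ℝ) 0 ^ 2 + dist (2:ℝ) 3 ^ 2 = 1^2 by
    rw [Real.dist_eq, Real.dist_eq]; norm_num]
  exact Real.sqrt_sq (by norm_num)
lemma dBA : dist pB pA = Real.sqrt 8 := by rw [dist_comm]; exact dAB
lemma dCB : dist pC pB = Real.sqrt 8 := by rw [dist_comm]; exact dBC
lemma dDC : dist pD pC = Real.sqrt 13 := by rw [dist_comm]; exact dCD
lemma dDA : dist pD pA = Real.sqrt 13 := by rw [dist_comm]; exact dAD
lemma dCA : dist pC pA = 4 := by rw [dist_comm]; exact dAC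
lemma dDB : dist pD pB = 1 := by rw [dist_comm]; exact dBD

lemma k1 : Real.sqrt 8 < 4 := by
  nlinarith [Real.sq_sqrt (show (0:ℝ) ≤ 8 by norm_num), Real.sqrt_nonneg 8]
lemma k2 : Real.sqrt 13 < 4 := by
  nlinarith [Real.sq_sqrt (show (0:ℝ) ≤ 13 by norm_num), Real.sqrt_nonneg 13]
lemma k3 : 5 < Real.sqrt 8 + Real.sqrt 13 := by
  have h : Real.sqrt 8 * Real.sqrt 13 = Real.sqrt 104 := by
    rw [← Real.sqrt_mul (by norm_num)]; norm_num
  have h2 : (10:ℝ) < Real.sqrt 104 := by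
    nlinarith [Real.sq_sqrt (show (0:ℝ) ≤ 104 by norm_num), Real.sqrt_nonneg 104]
  nlinarith [Real.sq_sqrt (show (0:ℝ) ≤ 8 by norm_num),
    Real.sq_sqrt (show (0:ℝ) ≤ 13 by norm_num),
    Real.sqrt_nonneg 8, Real.sqrt_nonneg 13]

lemma nAB : pA ≠ pB := by
  intro h
  have h0 : pA 0 = pB 0 := by rw [h]
  rw [pA0, pB0] at h0; norm_num at h0
lemma nAC : pA ≠ pC := by
  intro h
  have h0 : pA 0 = pC 0 := by rw [h]
  rw [pA0, pC0] at h0; norm_num at h0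
lemma nAD : pA ≠ pD := by
  intro h
  have h0 : pA 0 = pD 0 := by rw [h]
  rw [pA0, pD0] at h0; norm_num at h0
lemma nBC : pB ≠ pC := by
  intro h
  have h0 : pB 0 = pC 0 := by rw [h]
  rw [pB0, pC0] at h0; norm_num at h0
lemma nBD : pB ≠ pD := by
  intro h
  have h0 : pB 1 = pD 1 := by rw [h]
  rw [pB1, pD1] at h0; norm_num at h0
lemma nCD : pC ≠ pD := by
  intro h
  have h0 : pC 0 = pD 0 := by rw [h]
  rw [pC0, pD0] at h0; norm_num at h0

lemma ecyc4 (p q r s : Pt) :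
    ecycleLen [p, q, r, s] = dist p q + dist q r + dist r s + dist s p := by
  simp [ecycleLen, List.rotate]
  ring

lemma notCol (p q r : Pt)
    (h : (q 0 - p 0) * (r 1 - p 1) - (q 1 - p 1) * (r 0 - p 0) ≠ 0) :
    ¬ Collinear ℝ ({p, q, r} : Set Pt) := by
  intro hc
  rw [collinear_iff_of_mem (Set.mem_insert p _)] at hc
  obtain ⟨v, hv⟩ := hc
  obtain ⟨tq, hq⟩ := hv q (by simp)
  obtain ⟨tr, hr⟩ := hv r (by simp)
  apply h
  have hq0 : q 0 = tq * v 0 + p 0 := by rw [hq]; rfl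
  have hq1 : q 1 = tq * v 1 + p 1 := by rw [hq]; rfl
  have hr0 : r 0 = tr * v 0 + p 0 := by rw [hr]; rfl
  have hr1 : r 1 = tr * v 1 + p 1 := by rw [hr]; rfl
  rw [hq0, hq1, hr0, hr1]; ring

lemma cardS : ({pA, pB, pC, pD} : Finset Pt).card = 4 := by
  rw [Finset.card_insert_of_notMem (by simp [nAB, nAC, nAD]),
    Finset.card_insert_of_notMem (by simp [nBC, nBD]),
    Finset.card_insert_of_notMem (by simp [nCD]), Finset.card_singleton]

lemma hamO : IsHamCycleOn ({pA, pB, pC, pD} : Finset Pt) [pA, pB, pC, pD] := by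
  constructor
  · simp [nAB, nAC, nAD, nBC, nBD, nCD]
  · simp

/-- There is a finite planar point set `S` (at least 4 points, no three collinear)
such that no longest Hamiltonian cycle on `S` contains an edge between a
diametric pair: every edge of every longest cycle is strictly shorter than some
pairwise distance in `S`. -/
theorem stmt14 :
    ∃ S : Finset Pt, 4 ≤ S.card ∧
      (∀ p ∈ S, ∀ q ∈ S, ∀ r ∈ S, p ≠ q → p ≠ r → q ≠ r →
        ¬ Collinear ℝ ({p, q, r} : Set Pt)) ∧
      ∀ C : List Pt, IsHamCycleOn S C →
        (∀ L : List Pt, IsHamCycleOn S L → ecycleLen L ≤ ecycleLen C) →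
        ∀ e ∈ C.zip (C.rotate 1), ∃ x ∈ S, ∃ y ∈ S, dist e.1 e.2 < dist x y := by

  refine ⟨{pA, pB, pC, pD}, by rw [cardS], ?_, ?_⟩
  · intro p hp q hq r hr hpq hpr hqr
    simp only [Finset.mem_insert, Finset.mem_singleton] at hp hq hr
    rcases hp with rfl|rfl|rfl|rfl <;> rcases hq with rfl|rfl|rfl|rfl <;>
      rcases hr with rfl|rfl|rfl|rfl <;>
      first
        | exact absurd rfl hpq
        | exact absurd rfl hpr
        | exact absurd rfl hqr
        | (apply notCol; rw [pA0, pA1, pB0, pB1, pC0, pC1, pD0, pD1]; norm_num)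
        | (apply notCol
           simp only [pA0, pA1, pB0, pB1, pC0, pC1, pD0, pD1]
           norm_num)
  · intro C hC hopt e he
    obtain ⟨hnd, htf⟩ := hC
    have hlen : C.length = 4 := by
      have h := List.toFinset_card_of_nodup hnd
      rw [htf, cardS] at h; omega
    have hmem : ∀ x ∈ C, x = pA ∨ x = pB ∨ x = pC ∨ x = pD := by
      intro x hx
      have : x ∈ C.toFinset := List.mem_toFinset.2 hx
      rw [htf] at this
      simpa only [Finset.mem_insert, Finset.mem_singleton] using this
    match C, hlen with
    | [p, q, r, s], _ =>
      have hp := hmem p (by simp)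
      have hq := hmem q (by simp)
      have hr := hmem r (by simp)
      have hs := hmem s (by simp)
      simp only [List.nodup_cons, List.mem_cons, List.not_mem_nil, or_false,
        not_or, List.nodup_nil, and_true, List.mem_singleton] at hnd
      obtain ⟨⟨hpq, hpr, hps⟩, ⟨hqr, hqs⟩, hrs⟩ := hnd
      simp only [List.rotate_cons_succ, List.rotate_zero, List.cons_append,
        List.nil_append, List.zip_cons_cons, List.zip_nil_right, List.mem_cons,
        List.not_mem_nil, or_false] at he
      rcases hp with rfl|rfl|rfl|rfl <;> rcases hq with rfl|rfl|rfl|rfl <;>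
        rcases hr with rfl|rfl|rfl|rfl <;> rcases hs with rfl|rfl|rfl|rfl <;>
        first
          | exact absurd rfl hpq
          | exact absurd rfl hpr
          | exact absurd rfl hps
          | exact absurd rfl hqr
          | exact absurd rfl hqs
          | exact absurd rfl hrs
          | exact absurd rfl hrs.1
          | (refine ⟨pA, by simp, pC, by simp, ?_⟩
             rw [dAC]
             rcases he with rfl|rfl|rfl|rfl <;>
               simp only [dAB, dBC, dCD, dAD, dBA, dCB, dDC, dDA] <;>
               first | exact k1 | exact k2)
          | (exfalso
             have hX := hopt [pA, pB, pC, pD] hamO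
             rw [ecyc4, ecyc4] at hX
             simp only [dAB, dBC, dCD, dAD, dAC, dBD, dBA, dCB, dDC, dDA, dCA, dDB] at hX
             linarith [k3])
end

section
/- Let S be a simple polygon (noncrossing Hamiltonian cycle with straight-line edges) on n ≥ 4 points in the plane, no three collinear. Then S has an edge whose Euclidean length is among the smallest ⌈3n²/8 + n/8⌉ of the C(n,2) pairwise distances of the vertex set. Equivalently, the number of vertex pairs {p, p'} that are not edges of S and satisfy |pp'| > (length of the shortest edge of S) is at least (1/4)(C(n,2) - 2n). -/
open scoped Classical

/-- A cycle is noncrossing (a simple polygon) if no two of its edges intersect in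
their relative interiors (open segments). -/
def CycleNoncrossing (l : List Pt) : Prop :=
  ∀ e₁ ∈ l.zip (l.rotate 1), ∀ e₂ ∈ l.zip (l.rotate 1), e₁ ≠ e₂ →
    openSegment ℝ e₁.1 e₁.2 ∩ openSegment ℝ e₂.1 e₂.2 = ∅

lemma finsetPairEq {α : Type*} [DecidableEq α] {a b c d : α} (hab : a ≠ b)
    (h : ({a, b} : Finset α) = {c, d}) : (a = c ∧ b = d) ∨ (a = d ∧ b = c) := by
  have ha : a ∈ ({c, d} : Finset α) := by rw [← h]; simp
  have hb : b ∈ ({c, d} : Finset α) := by rw [← h]; simp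
  simp only [Finset.mem_insert, Finset.mem_singleton] at ha hb
  rcases ha with rfl | rfl <;> rcases hb with h' | h' <;> tauto

lemma triCase {m : ℝ} {P W U V : Pt} (hPW : m ≤ dist P W) (hU : dist U W ≤ m)
    (hV : dist V W ≤ m) (hP : P ∈ convexHull ℝ ({W, U, V} : Set Pt))
    (hcol : ¬ Collinear ℝ ({U, P, V} : Set Pt)) : False := by
  rw [show ({W, U, V} : Set Pt) = insert W {U, V} from rfl,
    convexHull_insert ⟨U, by simp⟩, mem_convexJoin] at hP
  obtain ⟨w, hw, z, hz, hPz⟩ := hP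
  rw [Set.mem_singleton_iff] at hw
  rw [hw] at hPz
  rw [convexHull_pair] at hz
  obtain ⟨a, b, ha, hb, hab, rfl⟩ := hz
  have e1 : dist W P + dist P (a • U + b • V) = dist W (a • U + b • V) :=
    dist_add_dist_of_mem_segment hPz
  have e2 : dist W (a • U + b • V) ≤ m := by
    have hWeq : W - (a • U + b • V) = a • (W - U) + b • (W - V) := by
      have h1 : a • (W - U) + b • (W - V) = (a + b) • W - (a • U + b • V) := by
        rw [smul_sub, smul_sub, add_smul]; abel
      rw [h1, hab, one_smul]
    rw [dist_eq_norm, hWeq]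
    calc ‖a • (W - U) + b • (W - V)‖ ≤ ‖a • (W - U)‖ + ‖b • (W - V)‖ := norm_add_le _ _
      _ = a * ‖W - U‖ + b * ‖W - V‖ := by
          rw [norm_smul, norm_smul, Real.norm_of_nonneg ha, Real.norm_of_nonneg hb]
      _ ≤ a * m + b * m := by
          have hWU : ‖W - U‖ ≤ m := by rw [← dist_eq_norm, dist_comm]; exact hU
          have hWV : ‖W - V‖ ≤ m := by rw [← dist_eq_norm, dist_comm]; exact hV
          have := mul_le_mul_of_nonneg_left hWU ha
          have := mul_le_mul_of_nonneg_left hWV hb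
          linarith
      _ = m := by rw [← add_mul, hab, one_mul]
  have hPWc : dist W P = dist P W := dist_comm _ _
  have hz0 : dist P (a • U + b • V) ≤ 0 := by linarith [dist_nonneg (x := W) (y := P)]
  have hPeq : P = a • U + b • V := by
    have := dist_le_zero.mp hz0
    exact this
  have hPseg : P ∈ segment ℝ U V := by
    rw [hPeq]; exact ⟨a, b, ha, hb, hab, rfl⟩
  exact hcol (mem_segment_iff_wbtw.mp hPseg).collinear

lemma segSame {A B C D x : Pt}
    (hd : openSegment ℝ A B ∩ openSegment ℝ C D = ∅)
    (h1 : ¬ Collinear ℝ ({C, A, D} : Set Pt)) (h2 : ¬ Collinear ℝ ({C, B, D} : Set Pt))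
    (h3 : ¬ Collinear ℝ ({A, C, B} : Set Pt)) (h4 : ¬ Collinear ℝ ({A, D, B} : Set Pt))
    (hx1 : x ∈ segment ℝ A B) (hx2 : x ∈ segment ℝ C D) : False := by
  by_cases hA : x = A
  · subst hA; exact h1 (mem_segment_iff_wbtw.mp hx2).collinear
  by_cases hB : x = B
  · subst hB; exact h2 (mem_segment_iff_wbtw.mp hx2).collinear
  by_cases hC : x = C
  · subst hC; exact h3 (mem_segment_iff_wbtw.mp hx1).collinear
  by_cases hD : x = D
  · subst hD; exact h4 (mem_segment_iff_wbtw.mp hx1).collinear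
  have o1 : x ∈ openSegment ℝ A B :=
    mem_openSegment_of_ne_left_right (fun h => hA h.symm) (fun h => hB h.symm) hx1
  have o2 : x ∈ openSegment ℝ C D :=
    mem_openSegment_of_ne_left_right (fun h => hC h.symm) (fun h => hD h.symm) hx2
  have : x ∈ openSegment ℝ A B ∩ openSegment ℝ C D := ⟨o1, o2⟩
  rw [hd] at this
  exact this

lemma segCross {A B C D x : Pt} {m : ℝ}
    (hx1 : x ∈ segment ℝ A C) (hx2 : x ∈ segment ℝ B D)
    (hAC : dist A C ≤ m) (hBD : dist B D ≤ m)
    (hAB : m ≤ dist A B) (hCD : m ≤ dist C D)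
    (hd : openSegment ℝ A B ∩ openSegment ℝ C D = ∅)
    (h1 : ¬ Collinear ℝ ({C, A, D} : Set Pt)) (h2 : ¬ Collinear ℝ ({C, B, D} : Set Pt))
    (h3 : ¬ Collinear ℝ ({A, C, B} : Set Pt)) (h4 : ¬ Collinear ℝ ({A, D, B} : Set Pt)) :
    False := by
  have e1 : dist A x + dist x C = dist A C := dist_add_dist_of_mem_segment hx1
  have e2 : dist B x + dist x D = dist B D := dist_add_dist_of_mem_segment hx2
  have t1 : dist A B ≤ dist A x + dist x B := dist_triangle _ _ _
  have t2 : dist C D ≤ dist C x + dist x D := dist_triangle _ _ _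
  have c1 : dist x B = dist B x := dist_comm _ _
  have c2 : dist C x = dist x C := dist_comm _ _
  have q1 : dist A x + dist x B = dist A B := by linarith
  have q2 : dist C x + dist x D = dist C D := by linarith
  have w1 : Wbtw ℝ A x B := dist_add_dist_eq_iff.mp q1
  have w2 : Wbtw ℝ C x D := dist_add_dist_eq_iff.mp q2
  exact segSame hd h1 h2 h3 h4 w1.mem_segment w2.mem_segment

lemma crossLemma {A B C D : Pt}
    (hAB : A ≠ B) (hCD : C ≠ D) (hAC : A ≠ C) (hAD : A ≠ D) (hBC : B ≠ C) (hBD : B ≠ D)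
    (hd : openSegment ℝ A B ∩ openSegment ℝ C D = ∅)
    (hgen4 : ∀ p q r : Pt, p ∈ ({A, B, C, D} : Set Pt) → q ∈ ({A, B, C, D} : Set Pt) →
      r ∈ ({A, B, C, D} : Set Pt) → p ≠ q → p ≠ r → q ≠ r →
      ¬ Collinear ℝ ({p, q, r} : Set Pt)) :
    min (dist A B) (dist C D) < dist A C ∨ min (dist A B) (dist C D) < dist A D ∨
    min (dist A B) (dist C D) < dist B C ∨ min (dist A B) (dist C D) < dist B D := by
  by_contra hcon
  push_neg at hcon
  obtain ⟨hAC', hAD', hBC', hBD'⟩ := hcon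
  set m := min (dist A B) (dist C D) with hm
  have hABm : m ≤ dist A B := min_le_left _ _
  have hCDm : m ≤ dist C D := min_le_right _ _
  have nCAD : ¬ Collinear ℝ ({C, A, D} : Set Pt) :=
    hgen4 C A D (by simp) (by simp) (by simp) hAC.symm hCD hAD
  have nCBD : ¬ Collinear ℝ ({C, B, D} : Set Pt) :=
    hgen4 C B D (by simp) (by simp) (by simp) hBC.symm hCD hBD
  have nACB : ¬ Collinear ℝ ({A, C, B} : Set Pt) :=
    hgen4 A C B (by simp) (by simp) (by simp) hAC hAB hBC.symm
  have nADB : ¬ Collinear ℝ ({A, D, B} : Set Pt) :=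
    hgen4 A D B (by simp) (by simp) (by simp) hAD hAB hBD.symm
  have nDAC : ¬ Collinear ℝ ({D, A, C} : Set Pt) :=
    hgen4 D A C (by simp) (by simp) (by simp) hAD.symm hCD.symm hAC
  have nDBC : ¬ Collinear ℝ ({D, B, C} : Set Pt) :=
    hgen4 D B C (by simp) (by simp) (by simp) hBD.symm hCD.symm hBC
  have hd' : openSegment ℝ A B ∩ openSegment ℝ D C = ∅ := by
    rw [openSegment_symm ℝ D C]; exact hd
  set f : Fin 4 → Pt := ![A, B, C, D] with hfdef
  have hf0 : f 0 = A := rfl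
  have hf1 : f 1 = B := rfl
  have hf2 : f 2 = C := rfl
  have hf3 : f 3 = D := rfl
  have hdep : ¬ AffineIndependent ℝ f := by
    intro hind
    have h4' := hind.card_le_finrank_succ
    have hle : Module.finrank ℝ ↥(vectorSpan ℝ (Set.range f)) ≤ 2 := by
      have h5 := Submodule.finrank_le (vectorSpan ℝ (Set.range f))
      simpa [finrank_euclideanSpace_fin] using h5
    simp only [Fintype.card_fin] at h4'
    omega
  obtain ⟨I, x, hx1, hx2⟩ := Convex.radon_partition hdep
  -- case analysis on membership of each index
  by_cases h0 : (0 : Fin 4) ∈ I <;> by_cases h1 : (1 : Fin 4) ∈ I <;>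
    by_cases h2 : (2 : Fin 4) ∈ I <;> by_cases h3 : (3 : Fin 4) ∈ I
  -- TTTT
  · have hIc : Iᶜ = (∅ : Set (Fin 4)) := by ext i; fin_cases i <;> simp [h0, h1, h2, h3]
    rw [hIc, Set.image_empty, convexHull_empty] at hx2
    exact hx2
  -- TTTF : I = {0,1,2}, Iᶜ = {3} : x = D inside {C,A,B}
  · have hIeq : I = ({0, 1, 2} : Set (Fin 4)) := by ext i; fin_cases i <;> simp [h0, h1, h2, h3]
    have hIc : Iᶜ = ({3} : Set (Fin 4)) := by
      ext i; fin_cases i <;> simp [h0, h1, h2, h3]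
    have him1 : f '' ({0, 1, 2} : Set (Fin 4)) = {C, A, B} := by
      simp only [Set.image_insert_eq, Set.image_singleton, hf0, hf1, hf2]
      ext y
      simp only [Set.mem_insert_iff, Set.mem_singleton_iff]
      constructor <;> rintro (rfl | rfl | rfl) <;> simp
    have him2 : f '' ({3} : Set (Fin 4)) = {D} := by
      simp only [Set.image_singleton, hf3]
    rw [hIeq, him1] at hx1
    rw [hIc, him2, convexHull_singleton, Set.mem_singleton_iff] at hx2
    rw [hx2] at hx1
    exact triCase (m := m) (P := D) (W := C) (U := A) (V := B)
      (by rw [dist_comm D C]; exact hCDm) hAC' hBC' hx1 nADB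
  -- TTFT : I = {0,1,3}, Iᶜ = {2} : x = C inside {D,A,B}
  · have hIeq : I = ({0, 1, 3} : Set (Fin 4)) := by ext i; fin_cases i <;> simp [h0, h1, h2, h3]
    have hIc : Iᶜ = ({2} : Set (Fin 4)) := by
      ext i; fin_cases i <;> simp [h0, h1, h2, h3]
    have him1 : f '' ({0, 1, 3} : Set (Fin 4)) = {D, A, B} := by
      simp only [Set.image_insert_eq, Set.image_singleton, hf0, hf1, hf3]
      ext y
      simp only [Set.mem_insert_iff, Set.mem_singleton_iff]
      constructor <;> rintro (rfl | rfl | rfl) <;> simp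
    have him2 : f '' ({2} : Set (Fin 4)) = {C} := by
      simp only [Set.image_singleton, hf2]
    rw [hIeq, him1] at hx1
    rw [hIc, him2, convexHull_singleton, Set.mem_singleton_iff] at hx2
    rw [hx2] at hx1
    exact triCase (m := m) (P := C) (W := D) (U := A) (V := B) hCDm hAD' hBD' hx1 nACB
  -- TTFF : {A,B} vs {C,D}
  · have hIeq : I = ({0, 1} : Set (Fin 4)) := by ext i; fin_cases i <;> simp [h0, h1, h2, h3]
    have hIc : Iᶜ = ({2, 3} : Set (Fin 4)) := by
      ext i; fin_cases i <;> simp [h0, h1, h2, h3]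
    have him1 : f '' ({0, 1} : Set (Fin 4)) = {A, B} := by
      simp only [Set.image_insert_eq, Set.image_singleton, hf0, hf1]
    have him2 : f '' ({2, 3} : Set (Fin 4)) = {C, D} := by
      simp only [Set.image_insert_eq, Set.image_singleton, hf2, hf3]
    rw [hIeq, him1, convexHull_pair] at hx1
    rw [hIc, him2, convexHull_pair] at hx2
    exact segSame hd nCAD nCBD nACB nADB hx1 hx2
  -- TFTT : I = {0,2,3}, Iᶜ = {1} : x = B inside {A,C,D}
  · have hIeq : I = ({0, 2, 3} : Set (Fin 4)) := by ext i; fin_cases i <;> simp [h0, h1, h2, h3]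
    have hIc : Iᶜ = ({1} : Set (Fin 4)) := by
      ext i; fin_cases i <;> simp [h0, h1, h2, h3]
    have him1 : f '' ({0, 2, 3} : Set (Fin 4)) = {A, C, D} := by
      simp only [Set.image_insert_eq, Set.image_singleton, hf0, hf2, hf3]
    have him2 : f '' ({1} : Set (Fin 4)) = {B} := by
      simp only [Set.image_singleton, hf1]
    rw [hIeq, him1] at hx1
    rw [hIc, him2, convexHull_singleton, Set.mem_singleton_iff] at hx2
    rw [hx2] at hx1
    exact triCase (m := m) (P := B) (W := A) (U := C) (V := D)
      (by rw [dist_comm B A]; exact hABm) (by rw [dist_comm C A]; exact hAC')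
      (by rw [dist_comm D A]; exact hAD') hx1 nCBD
  -- TFTF : {A,C} vs {B,D} : crossing pairing 1
  · have hIeq : I = ({0, 2} : Set (Fin 4)) := by ext i; fin_cases i <;> simp [h0, h1, h2, h3]
    have hIc : Iᶜ = ({1, 3} : Set (Fin 4)) := by
      ext i; fin_cases i <;> simp [h0, h1, h2, h3]
    have him1 : f '' ({0, 2} : Set (Fin 4)) = {A, C} := by
      simp only [Set.image_insert_eq, Set.image_singleton, hf0, hf2]
    have him2 : f '' ({1, 3} : Set (Fin 4)) = {B, D} := by
      simp only [Set.image_insert_eq, Set.image_singleton, hf1, hf3]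
    rw [hIeq, him1, convexHull_pair] at hx1
    rw [hIc, him2, convexHull_pair] at hx2
    exact segCross hx1 hx2 hAC' hBD' hABm hCDm hd nCAD nCBD nACB nADB
  -- TFFT : {A,D} vs {B,C} : crossing pairing 2
  · have hIeq : I = ({0, 3} : Set (Fin 4)) := by ext i; fin_cases i <;> simp [h0, h1, h2, h3]
    have hIc : Iᶜ = ({1, 2} : Set (Fin 4)) := by
      ext i; fin_cases i <;> simp [h0, h1, h2, h3]
    have him1 : f '' ({0, 3} : Set (Fin 4)) = {A, D} := by
      simp only [Set.image_insert_eq, Set.image_singleton, hf0, hf3]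
    have him2 : f '' ({1, 2} : Set (Fin 4)) = {B, C} := by
      simp only [Set.image_insert_eq, Set.image_singleton, hf1, hf2]
    rw [hIeq, him1, convexHull_pair] at hx1
    rw [hIc, him2, convexHull_pair] at hx2
    exact segCross hx1 hx2 hAD' hBC' hABm (by rw [dist_comm]; exact hCDm) hd'
      nDAC nDBC nADB nACB
  -- TFFF : I = {0} : x = A inside {B,C,D}
  · have hIeq : I = ({0} : Set (Fin 4)) := by ext i; fin_cases i <;> simp [h0, h1, h2, h3]
    have hIc : Iᶜ = ({1, 2, 3} : Set (Fin 4)) := by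
      ext i; fin_cases i <;> simp [h0, h1, h2, h3]
    have him1 : f '' ({0} : Set (Fin 4)) = {A} := by
      simp only [Set.image_singleton, hf0]
    have him2 : f '' ({1, 2, 3} : Set (Fin 4)) = {B, C, D} := by
      simp only [Set.image_insert_eq, Set.image_singleton, hf1, hf2, hf3]
    rw [hIeq, him1, convexHull_singleton, Set.mem_singleton_iff] at hx1
    rw [hIc, him2] at hx2
    rw [hx1] at hx2
    exact triCase (m := m) (P := A) (W := B) (U := C) (V := D) hABm
      (by rw [dist_comm C B]; exact hBC') (by rw [dist_comm D B]; exact hBD') hx2 nCAD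
  -- FTTT : I = {1,2,3} = {B,C,D}, Iᶜ = {0} : x = A
  · have hIeq : I = ({1, 2, 3} : Set (Fin 4)) := by ext i; fin_cases i <;> simp [h0, h1, h2, h3]
    have hIc : Iᶜ = ({0} : Set (Fin 4)) := by
      ext i; fin_cases i <;> simp [h0, h1, h2, h3]
    have him1 : f '' ({1, 2, 3} : Set (Fin 4)) = {B, C, D} := by
      simp only [Set.image_insert_eq, Set.image_singleton, hf1, hf2, hf3]
    have him2 : f '' ({0} : Set (Fin 4)) = {A} := by
      simp only [Set.image_singleton, hf0]
    rw [hIeq, him1] at hx1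
    rw [hIc, him2, convexHull_singleton, Set.mem_singleton_iff] at hx2
    rw [hx2] at hx1
    exact triCase (m := m) (P := A) (W := B) (U := C) (V := D) hABm
      (by rw [dist_comm C B]; exact hBC') (by rw [dist_comm D B]; exact hBD') hx1 nCAD
  -- FTTF : I = {1,2} = {B,C}, Iᶜ = {0,3} = {A,D} : pairing 2
  · have hIeq : I = ({1, 2} : Set (Fin 4)) := by ext i; fin_cases i <;> simp [h0, h1, h2, h3]
    have hIc : Iᶜ = ({0, 3} : Set (Fin 4)) := by
      ext i; fin_cases i <;> simp [h0, h1, h2, h3]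
    have him1 : f '' ({1, 2} : Set (Fin 4)) = {B, C} := by
      simp only [Set.image_insert_eq, Set.image_singleton, hf1, hf2]
    have him2 : f '' ({0, 3} : Set (Fin 4)) = {A, D} := by
      simp only [Set.image_insert_eq, Set.image_singleton, hf0, hf3]
    rw [hIeq, him1, convexHull_pair] at hx1
    rw [hIc, him2, convexHull_pair] at hx2
    exact segCross hx2 hx1 hAD' hBC' hABm (by rw [dist_comm]; exact hCDm) hd'
      nDAC nDBC nADB nACB
  -- FTFT : I = {1,3} = {B,D}, Iᶜ = {0,2} = {A,C} : pairing 1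
  · have hIeq : I = ({1, 3} : Set (Fin 4)) := by ext i; fin_cases i <;> simp [h0, h1, h2, h3]
    have hIc : Iᶜ = ({0, 2} : Set (Fin 4)) := by
      ext i; fin_cases i <;> simp [h0, h1, h2, h3]
    have him1 : f '' ({1, 3} : Set (Fin 4)) = {B, D} := by
      simp only [Set.image_insert_eq, Set.image_singleton, hf1, hf3]
    have him2 : f '' ({0, 2} : Set (Fin 4)) = {A, C} := by
      simp only [Set.image_insert_eq, Set.image_singleton, hf0, hf2]
    rw [hIeq, him1, convexHull_pair] at hx1
    rw [hIc, him2, convexHull_pair] at hx2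
    exact segCross hx2 hx1 hAC' hBD' hABm hCDm hd nCAD nCBD nACB nADB
  -- FTFF : I = {1} : x = B
  · have hIeq : I = ({1} : Set (Fin 4)) := by ext i; fin_cases i <;> simp [h0, h1, h2, h3]
    have hIc : Iᶜ = ({0, 2, 3} : Set (Fin 4)) := by
      ext i; fin_cases i <;> simp [h0, h1, h2, h3]
    have him1 : f '' ({1} : Set (Fin 4)) = {B} := by
      simp only [Set.image_singleton, hf1]
    have him2 : f '' ({0, 2, 3} : Set (Fin 4)) = {A, C, D} := by
      simp only [Set.image_insert_eq, Set.image_singleton, hf0, hf2, hf3]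
    rw [hIeq, him1, convexHull_singleton, Set.mem_singleton_iff] at hx1
    rw [hIc, him2] at hx2
    rw [hx1] at hx2
    exact triCase (m := m) (P := B) (W := A) (U := C) (V := D)
      (by rw [dist_comm B A]; exact hABm) (by rw [dist_comm C A]; exact hAC')
      (by rw [dist_comm D A]; exact hAD') hx2 nCBD
  -- FFTT : I = {2,3} = {C,D}, Iᶜ = {0,1} = {A,B}
  · have hIeq : I = ({2, 3} : Set (Fin 4)) := by ext i; fin_cases i <;> simp [h0, h1, h2, h3]
    have hIc : Iᶜ = ({0, 1} : Set (Fin 4)) := by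
      ext i; fin_cases i <;> simp [h0, h1, h2, h3]
    have him1 : f '' ({2, 3} : Set (Fin 4)) = {C, D} := by
      simp only [Set.image_insert_eq, Set.image_singleton, hf2, hf3]
    have him2 : f '' ({0, 1} : Set (Fin 4)) = {A, B} := by
      simp only [Set.image_insert_eq, Set.image_singleton, hf0, hf1]
    rw [hIeq, him1, convexHull_pair] at hx1
    rw [hIc, him2, convexHull_pair] at hx2
    exact segSame hd nCAD nCBD nACB nADB hx2 hx1
  -- FFTF : I = {2} : x = C inside {D,A,B}
  · have hIeq : I = ({2} : Set (Fin 4)) := by ext i; fin_cases i <;> simp [h0, h1, h2, h3]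
    have hIc : Iᶜ = ({0, 1, 3} : Set (Fin 4)) := by
      ext i; fin_cases i <;> simp [h0, h1, h2, h3]
    have him1 : f '' ({2} : Set (Fin 4)) = {C} := by
      simp only [Set.image_singleton, hf2]
    have him2 : f '' ({0, 1, 3} : Set (Fin 4)) = {D, A, B} := by
      simp only [Set.image_insert_eq, Set.image_singleton, hf0, hf1, hf3]
      ext y
      simp only [Set.mem_insert_iff, Set.mem_singleton_iff]
      constructor <;> rintro (rfl | rfl | rfl) <;> simp
    rw [hIeq, him1, convexHull_singleton, Set.mem_singleton_iff] at hx1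
    rw [hIc, him2] at hx2
    rw [hx1] at hx2
    exact triCase (m := m) (P := C) (W := D) (U := A) (V := B) hCDm hAD' hBD' hx2 nACB
  -- FFFT : I = {3} : x = D inside {C,A,B}
  · have hIeq : I = ({3} : Set (Fin 4)) := by ext i; fin_cases i <;> simp [h0, h1, h2, h3]
    have hIc : Iᶜ = ({0, 1, 2} : Set (Fin 4)) := by
      ext i; fin_cases i <;> simp [h0, h1, h2, h3]
    have him1 : f '' ({3} : Set (Fin 4)) = {D} := by
      simp only [Set.image_singleton, hf3]
    have him2 : f '' ({0, 1, 2} : Set (Fin 4)) = {C, A, B} := by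
      simp only [Set.image_insert_eq, Set.image_singleton, hf0, hf1, hf2]
      ext y
      simp only [Set.mem_insert_iff, Set.mem_singleton_iff]
      constructor <;> rintro (rfl | rfl | rfl) <;> simp
    rw [hIeq, him1, convexHull_singleton, Set.mem_singleton_iff] at hx1
    rw [hIc, him2] at hx2
    rw [hx1] at hx2
    exact triCase (m := m) (P := D) (W := C) (U := A) (V := B)
      (by rw [dist_comm D C]; exact hCDm) hAC' hBC' hx2 nADB
  -- FFFF
  · have hIeq : I = (∅ : Set (Fin 4)) := by ext i; fin_cases i <;> simp [h0, h1, h2, h3]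
    rw [hIeq, Set.image_empty, convexHull_empty] at hx1
    exact hx1

set_option maxHeartbeats 2000000 in
/-- A simple polygon on `n ≥ 4` points (no three collinear) has an edge whose
length is among the smallest `3n²/8 + n/8` pairwise distances; equivalently, the
number of ordered vertex pairs `(p, p')` that are not edges and satisfy
`|pp'| > (shortest edge length)` is at least `2 · (1/4)(C(n,2) − 2n)`. -/
theorem stmt15 (P : Finset Pt) (n : ℕ) (hn : 4 ≤ n) (hcard : P.card = n)
    (hgen : ∀ p ∈ P, ∀ q ∈ P, ∀ r ∈ P, p ≠ q → p ≠ r → q ≠ r →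
      ¬ Collinear ℝ ({p, q, r} : Set Pt))
    (C : List Pt) (hC : IsHamCycleOn P C) (hsimple : CycleNoncrossing C)
    (e₀ : Pt × Pt) (he₀ : e₀ ∈ C.zip (C.rotate 1))
    (hmin : ∀ e ∈ C.zip (C.rotate 1), dist e₀.1 e₀.2 ≤ dist e.1 e.2) :
    ((1 : ℝ) / 2) * ((n * (n - 1) / 2 : ℝ) - 2 * n) ≤
      (((P ×ˢ P).filter fun q : Pt × Pt =>
          q.1 ≠ q.2 ∧ (q.1, q.2) ∉ C.zip (C.rotate 1) ∧
          (q.2, q.1) ∉ C.zip (C.rotate 1) ∧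
          dist e₀.1 e₀.2 < dist q.1 q.2).card : ℝ) := by
  classical
  obtain ⟨hnd, hPC⟩ := hC
  have hlen : C.length = n := by
    have h1 := List.toFinset_card_of_nodup hnd
    rw [hPC, hcard] at h1
    omega
  have hn0 : 0 < n := by omega
  set G : Finset (Pt × Pt) := (P ×ˢ P).filter fun q : Pt × Pt =>
      q.1 ≠ q.2 ∧ (q.1, q.2) ∉ C.zip (C.rotate 1) ∧
      (q.2, q.1) ∉ C.zip (C.rotate 1) ∧
      dist e₀.1 e₀.2 < dist q.1 q.2 with hGdef
  set v : ℕ → Pt := fun i => C.getD (i % n) 0 with hv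
  have hvC : ∀ i : ℕ, ∃ h : i % n < C.length, v i = C[i % n] := by
    intro i
    have h1 : i % n < C.length := by rw [hlen]; exact Nat.mod_lt _ hn0
    exact ⟨h1, List.getD_eq_getElem _ _ h1⟩
  have hvmem : ∀ i : ℕ, v i ∈ P := by
    intro i
    obtain ⟨h1, h2⟩ := hvC i
    rw [← hPC, List.mem_toFinset, h2]
    exact List.getElem_mem _
  have hvinj : ∀ s t : ℕ, v s = v t ↔ s % n = t % n := by
    intro s t
    obtain ⟨hs, hs'⟩ := hvC s
    obtain ⟨ht, ht'⟩ := hvC t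
    constructor
    · intro h
      rw [hs', ht'] at h
      exact hnd.getElem_inj_iff.mp h
    · intro h
      simp only [hv]
      rw [h]
  have hzlen : (C.zip (C.rotate 1)).length = n := by
    simp [List.length_zip, List.length_rotate, hlen]
  have hEget : ∀ (a : ℕ) (ha : a < n),
      (C.zip (C.rotate 1))[a]'(by rw [hzlen]; exact ha) = (v a, v (a + 1)) := by
    intro a ha
    have h1 : a < C.length := by rw [hlen]; exact ha
    have h2 : (a + 1) % C.length < C.length := Nat.mod_lt _ (by rw [hlen]; omega)
    rw [List.getElem_zip, List.getElem_rotate]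
    have e1 : v a = C[a]'h1 := by
      obtain ⟨h3, h4⟩ := hvC a
      rw [h4]
      have : a % n = a := Nat.mod_eq_of_lt ha
      simp only [this]
    have e2 : v (a + 1) = C[(a + 1) % C.length]'h2 := by
      obtain ⟨h3, h4⟩ := hvC (a + 1)
      rw [h4]
      have : (a + 1) % n = (a + 1) % C.length := by rw [hlen]
      simp only [this]
    rw [e1, e2]
  have hE : ∀ e : Pt × Pt, e ∈ C.zip (C.rotate 1) ↔ ∃ a, a < n ∧ e = (v a, v (a + 1)) := by
    intro e
    rw [List.mem_iff_getElem]
    constructor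
    · rintro ⟨a, ha, rfl⟩
      have ha' : a < n := by rwa [hzlen] at ha
      exact ⟨a, ha', hEget a ha'⟩
    · rintro ⟨a, ha, rfl⟩
      exact ⟨a, by rw [hzlen]; exact ha, hEget a ha⟩
  have hsucc : ∀ t, t < n → ((t + 1) % n = t + 1 ∧ t + 1 < n) ∨ (t + 1 = n ∧ (t + 1) % n = 0) := by
    intro t ht
    rcases Nat.lt_or_ge (t + 1) n with h | h
    · exact Or.inl ⟨Nat.mod_eq_of_lt h, h⟩
    · have he : t + 1 = n := by omega
      exact Or.inr ⟨he, by rw [he, Nat.mod_self]⟩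
  have hadj : ∀ t, t < n → v t ≠ v (t + 1) := by
    intro t ht h
    have h1 := (hvinj t (t + 1)).mp h
    have h2 : t % n = t := Nat.mod_eq_of_lt ht
    rcases hsucc t ht with ⟨h3, _⟩ | ⟨h3, h4⟩
    · rw [h2, h3] at h1; omega
    · rw [h2, h4] at h1; omega
  have hkey : ∀ k l i j : ℕ, k < n → l < n → k + 3 ≤ l → l + 3 ≤ k + n →
      (i = k ∨ i = k + 1) → (j = l ∨ j = l + 1) →
      v i ≠ v j ∧ (v i, v j) ∉ C.zip (C.rotate 1) ∧ (v j, v i) ∉ C.zip (C.rotate 1) := by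
    intro k l i j hk hl h3 h3' hi hj
    have hiln : i < n := by omega
    have hmi : i % n = i := Nat.mod_eq_of_lt hiln
    have hmj : j % n = j ∨ (j = n ∧ j % n = 0) := by
      rcases Nat.lt_or_ge j n with h | h
      · exact Or.inl (Nat.mod_eq_of_lt h)
      · have he : j = n := by omega
        exact Or.inr ⟨he, by rw [he, Nat.mod_self]⟩
    refine ⟨?_, ?_, ?_⟩
    · intro h
      have h1 := (hvinj i j).mp h
      rw [hmi] at h1
      rcases hmj with h' | ⟨h'1, h'2⟩
      · rw [h'] at h1; omega
      · rw [h'2] at h1; omega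
    · intro hmem
      obtain ⟨a, ha, hae⟩ := (hE _).mp hmem
      have h1 : v i = v a := congrArg Prod.fst hae
      have h2 : v j = v (a + 1) := congrArg Prod.snd hae
      have e1 := (hvinj i a).mp h1
      have e2 := (hvinj j (a + 1)).mp h2
      rw [hmi, Nat.mod_eq_of_lt ha] at e1
      rcases hmj with hj' | ⟨hj1, hj2⟩ <;> rcases hsucc a ha with ⟨ha', _⟩ | ⟨ha1, ha2⟩
      · rw [hj', ha'] at e2; omega
      · rw [hj', ha2] at e2; omega
      · rw [hj2, ha'] at e2; omega
      · omega
    · intro hmem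
      obtain ⟨a, ha, hae⟩ := (hE _).mp hmem
      have h1 : v j = v a := congrArg Prod.fst hae
      have h2 : v i = v (a + 1) := congrArg Prod.snd hae
      have e1 := (hvinj j a).mp h1
      have e2 := (hvinj i (a + 1)).mp h2
      rw [Nat.mod_eq_of_lt ha] at e1
      rw [hmi] at e2
      rcases hmj with hj' | ⟨hj1, hj2⟩ <;> rcases hsucc a ha with ⟨ha', _⟩ | ⟨ha1, ha2⟩
      · rw [hj'] at e1; rw [ha'] at e2; omega
      · rw [hj'] at e1; rw [ha2] at e2; omega
      · rw [hj2] at e1; rw [ha'] at e2; omega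
      · rw [hj2] at e1; rw [ha2] at e2; omega
  -- witness existence for each good index pair
  have hG : ∀ k l : ℕ, k < n → l < n → k + 3 ≤ l → l + 3 ≤ k + n →
      ∃ pq : Pt × Pt, (pq.1 = v k ∨ pq.1 = v (k + 1)) ∧ (pq.2 = v l ∨ pq.2 = v (l + 1)) ∧
        pq ∈ G ∧ (pq.2, pq.1) ∈ G := by
    intro k l hk hl h3 h3'
    have hek : (v k, v (k + 1)) ∈ C.zip (C.rotate 1) := (hE _).mpr ⟨k, hk, rfl⟩
    have hel : (v l, v (l + 1)) ∈ C.zip (C.rotate 1) := (hE _).mpr ⟨l, hl, rfl⟩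
    have hKL := hkey k l
    have hAC : v k ≠ v l := (hKL k l hk hl h3 h3' (Or.inl rfl) (Or.inl rfl)).1
    have hAD : v k ≠ v (l + 1) := (hKL k (l + 1) hk hl h3 h3' (Or.inl rfl) (Or.inr rfl)).1
    have hBC : v (k + 1) ≠ v l := (hKL (k + 1) l hk hl h3 h3' (Or.inr rfl) (Or.inl rfl)).1
    have hBD : v (k + 1) ≠ v (l + 1) :=
      (hKL (k + 1) (l + 1) hk hl h3 h3' (Or.inr rfl) (Or.inr rfl)).1
    have hnecc : (v k, v (k + 1)) ≠ (v l, v (l + 1)) := by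
      intro h
      exact hAC (congrArg Prod.fst h)
    have hdisj := hsimple _ hek _ hel hnecc
    have hgen4 : ∀ p q r : Pt, p ∈ ({v k, v (k + 1), v l, v (l + 1)} : Set Pt) →
        q ∈ ({v k, v (k + 1), v l, v (l + 1)} : Set Pt) →
        r ∈ ({v k, v (k + 1), v l, v (l + 1)} : Set Pt) → p ≠ q → p ≠ r → q ≠ r →
        ¬ Collinear ℝ ({p, q, r} : Set Pt) := by
      intro p q r hp hq hr hpq hpr hqr
      have hp' : p ∈ P := by
        simp only [Set.mem_insert_iff, Set.mem_singleton_iff] at hp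
        rcases hp with rfl | rfl | rfl | rfl <;> exact hvmem _
      have hq' : q ∈ P := by
        simp only [Set.mem_insert_iff, Set.mem_singleton_iff] at hq
        rcases hq with rfl | rfl | rfl | rfl <;> exact hvmem _
      have hr' : r ∈ P := by
        simp only [Set.mem_insert_iff, Set.mem_singleton_iff] at hr
        rcases hr with rfl | rfl | rfl | rfl <;> exact hvmem _
      exact hgen p hp' q hq' r hr' hpq hpr hqr
    have hcross := crossLemma (hadj k hk) (hadj l hl) hAC hAD hBC hBD hdisj hgen4
    have hd0m : dist e₀.1 e₀.2 ≤ min (dist (v k) (v (k + 1))) (dist (v l) (v (l + 1))) :=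
      le_min (hmin (v k, v (k + 1)) hek) (hmin (v l, v (l + 1)) hel)
    have mk : ∀ i j, (i = k ∨ i = k + 1) → (j = l ∨ j = l + 1) →
        min (dist (v k) (v (k + 1))) (dist (v l) (v (l + 1))) < dist (v i) (v j) →
        (v i, v j) ∈ G ∧ (v j, v i) ∈ G := by
      intro i j hi hj hlt
      obtain ⟨hne, hE1, hE2⟩ := hkey k l i j hk hl h3 h3' hi hj
      have hdlt : dist e₀.1 e₀.2 < dist (v i) (v j) := lt_of_le_of_lt hd0m hlt
      constructor
      · exact Finset.mem_filter.mpr ⟨Finset.mem_product.mpr ⟨hvmem i, hvmem j⟩,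
          hne, hE1, hE2, hdlt⟩
      · refine Finset.mem_filter.mpr ⟨Finset.mem_product.mpr ⟨hvmem j, hvmem i⟩,
          hne.symm, hE2, hE1, ?_⟩
        show dist e₀.1 e₀.2 < dist (v j) (v i)
        rw [dist_comm (v j) (v i)]
        exact hdlt
    rcases hcross with h | h | h | h
    · obtain ⟨m1, m2⟩ := mk k l (Or.inl rfl) (Or.inl rfl) h
      exact ⟨(v k, v l), Or.inl rfl, Or.inl rfl, m1, m2⟩
    · obtain ⟨m1, m2⟩ := mk k (l + 1) (Or.inl rfl) (Or.inr rfl) h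
      exact ⟨(v k, v (l + 1)), Or.inl rfl, Or.inr rfl, m1, m2⟩
    · obtain ⟨m1, m2⟩ := mk (k + 1) l (Or.inr rfl) (Or.inl rfl) h
      exact ⟨(v (k + 1), v l), Or.inr rfl, Or.inl rfl, m1, m2⟩
    · obtain ⟨m1, m2⟩ := mk (k + 1) (l + 1) (Or.inr rfl) (Or.inr rfl) h
      exact ⟨(v (k + 1), v (l + 1)), Or.inr rfl, Or.inr rfl, m1, m2⟩
  -- index set of good pairs of edges
  set K : Finset (ℕ × ℕ) := (Finset.range n ×ˢ Finset.range n).filter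
      (fun p2 => p2.1 + 3 ≤ p2.2 ∧ p2.2 + 3 ≤ p2.1 + n) with hKdef
  have hKmem : ∀ kl : ℕ × ℕ, kl ∈ K →
      kl.1 < n ∧ kl.2 < n ∧ kl.1 + 3 ≤ kl.2 ∧ kl.2 + 3 ≤ kl.1 + n := by
    intro kl hkl
    simp only [hKdef, Finset.mem_filter, Finset.mem_product, Finset.mem_range] at hkl
    exact ⟨hkl.1.1, hkl.1.2, hkl.2.1, hkl.2.2⟩
  set W : ℕ × ℕ → Pt × Pt := fun kl =>
      if h : kl.1 < n ∧ kl.2 < n ∧ kl.1 + 3 ≤ kl.2 ∧ kl.2 + 3 ≤ kl.1 + n then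
        Classical.choose (hG kl.1 kl.2 h.1 h.2.1 h.2.2.1 h.2.2.2)
      else ((0 : Pt), (0 : Pt)) with hWdef
  have hWspec : ∀ kl ∈ K, ((W kl).1 = v kl.1 ∨ (W kl).1 = v (kl.1 + 1)) ∧
      ((W kl).2 = v kl.2 ∨ (W kl).2 = v (kl.2 + 1)) ∧ W kl ∈ G ∧ ((W kl).2, (W kl).1) ∈ G := by
    intro kl hkl
    have h := hKmem kl hkl
    simp only [hWdef, dif_pos h]
    exact Classical.choose_spec (hG kl.1 kl.2 h.1 h.2.1 h.2.2.1 h.2.2.2)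
  set F : ℕ × ℕ → Finset Pt := fun kl => {(W kl).1, (W kl).2} with hFdef
  have hidx : ∀ z : Pt, z ∈ P → ∃ a, a < n ∧ z = v a := by
    intro z hz
    rw [← hPC, List.mem_toFinset, List.mem_iff_getElem] at hz
    obtain ⟨a, ha, hae⟩ := hz
    have ha' : a < n := by rwa [hlen] at ha
    refine ⟨a, ha', ?_⟩
    obtain ⟨h1, h2⟩ := hvC a
    rw [← hae, h2]
    have e : a % n = a := Nat.mod_eq_of_lt ha'
    simp only [e]
  have hAcard : ∀ (z : Pt) (az : ℕ), az < n → z = v az →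
      ((Finset.range n).filter (fun i => z = v i ∨ z = v (i + 1))).card ≤ 2 := by
    intro z az haz hvaz
    have hsub : (Finset.range n).filter (fun i => z = v i ∨ z = v (i + 1)) ⊆
        {az, (az + n - 1) % n} := by
      intro i hi
      rw [Finset.mem_filter, Finset.mem_range] at hi
      obtain ⟨hin, hcase⟩ := hi
      rcases hcase with h | h
      · have e : az % n = i % n := (hvinj az i).mp (hvaz.symm.trans h)
        rw [Nat.mod_eq_of_lt haz, Nat.mod_eq_of_lt hin] at e
        exact Finset.mem_insert.mpr (Or.inl e.symm)
      · have e : az % n = (i + 1) % n := (hvinj az (i + 1)).mp (hvaz.symm.trans h)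
        rw [Nat.mod_eq_of_lt haz] at e
        apply Finset.mem_insert.mpr
        right
        rw [Finset.mem_singleton]
        rcases hsucc i hin with ⟨e1, _⟩ | ⟨e1, e2⟩
        · rw [e1] at e
          have h' : az + n - 1 = i + n := by omega
          rw [h', Nat.add_mod_right, Nat.mod_eq_of_lt hin]
        · rw [e2] at e
          have h' : az + n - 1 = i := by omega
          rw [h', Nat.mod_eq_of_lt hin]
    refine le_trans (Finset.card_le_card hsub) ?_
    refine le_trans (Finset.card_insert_le _ _) ?_
    simp
  -- step 1 : each fiber of F on K has at most 4 elements
  have step1 : K.card ≤ 4 * (K.image F).card := by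
    apply Finset.card_le_mul_card_image
    intro s hs
    obtain ⟨kl₀, hkl₀, hs₀⟩ := Finset.mem_image.mp hs
    simp only [hFdef] at hs₀
    obtain ⟨hw1₀, hw2₀, hwG₀, hwG₀'⟩ := hWspec kl₀ hkl₀
    set p := (W kl₀).1 with hp
    set q := (W kl₀).2 with hq
    have hpq : p ≠ q := (Finset.mem_filter.mp hwG₀).2.1
    have hpP : p ∈ P := (Finset.mem_product.mp (Finset.mem_filter.mp hwG₀).1).1
    have hqP : q ∈ P := (Finset.mem_product.mp (Finset.mem_filter.mp hwG₀).1).2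
    obtain ⟨ap, hap, hvap⟩ := hidx p hpP
    obtain ⟨aq, haq, hvaq⟩ := hidx q hqP
    set Ap : Finset ℕ := (Finset.range n).filter (fun i => p = v i ∨ p = v (i + 1)) with hApdef
    set Aq : Finset ℕ := (Finset.range n).filter (fun i => q = v i ∨ q = v (i + 1)) with hAqdef
    have hfiber : (K.filter (fun kl => F kl = s)).card ≤ (Ap ×ˢ Aq).card := by
      apply Finset.card_le_card_of_injOn (fun kl => if W kl = (p, q) then kl else (kl.2, kl.1))
      · intro kl hkl
        simp only [Finset.mem_coe, Finset.mem_filter] at hkl ⊢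
        obtain ⟨hklK, hklf⟩ := hkl
        obtain ⟨hw1, hw2, hwG, _⟩ := hWspec kl hklK
        obtain ⟨hb1, hb2, _, _⟩ := hKmem kl hklK
        have hWne : (W kl).1 ≠ (W kl).2 := (Finset.mem_filter.mp hwG).2.1
        simp only [hFdef] at hklf
        have hklf' : ({(W kl).1, (W kl).2} : Finset Pt) = {p, q} := by
          rw [hklf, ← hs₀]
        rcases finsetPairEq hWne hklf' with ⟨e1, e2⟩ | ⟨e1, e2⟩
        · have hWeq : W kl = (p, q) := by
            rw [← e1, ← e2]
          rw [if_pos hWeq]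
          refine Finset.mem_product.mpr ⟨?_, ?_⟩
          · refine Finset.mem_filter.mpr ⟨Finset.mem_range.mpr hb1, ?_⟩
            rcases hw1 with h | h
            · exact Or.inl (e1 ▸ h.symm).symm
            · exact Or.inr (e1 ▸ h.symm).symm
          · refine Finset.mem_filter.mpr ⟨Finset.mem_range.mpr hb2, ?_⟩
            rcases hw2 with h | h
            · exact Or.inl (e2 ▸ h.symm).symm
            · exact Or.inr (e2 ▸ h.symm).symm
        · have hWne' : W kl ≠ (p, q) := by
            intro h
            exact hpq ((congrArg Prod.fst h).symm.trans e1)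
          rw [if_neg hWne']
          refine Finset.mem_product.mpr ⟨?_, ?_⟩
          · refine Finset.mem_filter.mpr ⟨Finset.mem_range.mpr hb2, ?_⟩
            rcases hw2 with h | h
            · exact Or.inl (e2 ▸ h.symm).symm
            · exact Or.inr (e2 ▸ h.symm).symm
          · refine Finset.mem_filter.mpr ⟨Finset.mem_range.mpr hb1, ?_⟩
            rcases hw1 with h | h
            · exact Or.inl (e1 ▸ h.symm).symm
            · exact Or.inr (e1 ▸ h.symm).symm
      · intro a ha b hb hab
        simp only [Finset.coe_filter, Set.mem_setOf_eq] at ha hb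
        obtain ⟨haK, _⟩ := ha
        obtain ⟨hbK, _⟩ := hb
        obtain ⟨_, _, ha3, _⟩ := hKmem a haK
        obtain ⟨_, _, hb3, _⟩ := hKmem b hbK
        dsimp only at hab
        split_ifs at hab with h1 h2 h2
        · exact hab
        · have e1 : a.1 = b.2 := congrArg Prod.fst hab
          have e2 : a.2 = b.1 := congrArg Prod.snd hab
          omega
        · have e1 : a.2 = b.1 := congrArg Prod.fst hab
          have e2 : a.1 = b.2 := congrArg Prod.snd hab
          omega
        · have e1 : a.2 = b.2 := congrArg Prod.fst hab
          have e2 : a.1 = b.1 := congrArg Prod.snd hab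
          exact Prod.ext_iff.mpr ⟨e2, e1⟩
    refine le_trans hfiber ?_
    rw [Finset.card_product]
    refine le_trans (Nat.mul_le_mul (hAcard p ap hap hvap) (hAcard q aq haq hvaq)) ?_
    norm_num
  -- step 2 : image of F is contained in image of G under the unordered-pair map
  have step2 : K.image F ⊆ G.image (fun pq : Pt × Pt => ({pq.1, pq.2} : Finset Pt)) := by
    intro s hs
    obtain ⟨kl, hkl, rfl⟩ := Finset.mem_image.mp hs
    exact Finset.mem_image.mpr ⟨W kl, (hWspec kl hkl).2.2.1, rfl⟩
  -- step 3 : each fiber of the unordered-pair map on G has at least 2 elements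
  have step3 : (G.image (fun pq : Pt × Pt => ({pq.1, pq.2} : Finset Pt))).card * 2 ≤ G.card := by
    have hmaps : ∀ x ∈ G, (fun pq : Pt × Pt => ({pq.1, pq.2} : Finset Pt)) x ∈
        G.image (fun pq : Pt × Pt => ({pq.1, pq.2} : Finset Pt)) :=
      fun x hx => Finset.mem_image_of_mem _ hx
    rw [Finset.card_eq_sum_card_fiberwise hmaps]
    have h2 : ∀ s ∈ G.image (fun pq : Pt × Pt => ({pq.1, pq.2} : Finset Pt)),
        2 ≤ (G.filter (fun pq : Pt × Pt => ({pq.1, pq.2} : Finset Pt) = s)).card := by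
      intro s hs
      obtain ⟨pq, hpq, rfl⟩ := Finset.mem_image.mp hs
      have hmem := Finset.mem_filter.mp hpq
      have hne : pq.1 ≠ pq.2 := hmem.2.1
      have hswap : (pq.2, pq.1) ∈ G := by
        refine Finset.mem_filter.mpr ⟨?_, hne.symm, hmem.2.2.2.1, hmem.2.2.1, ?_⟩
        · have hprod := Finset.mem_product.mp hmem.1
          exact Finset.mem_product.mpr ⟨hprod.2, hprod.1⟩
        · show dist e₀.1 e₀.2 < dist pq.2 pq.1
          rw [dist_comm pq.2 pq.1]
          exact hmem.2.2.2.2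
      have hnepair : pq ≠ (pq.2, pq.1) := by
        intro h
        exact hne (congrArg Prod.fst h)
      have hsub : ({pq, (pq.2, pq.1)} : Finset (Pt × Pt)) ⊆
          G.filter (fun x : Pt × Pt => ({x.1, x.2} : Finset Pt) = {pq.1, pq.2}) := by
        intro x hx
        rcases Finset.mem_insert.mp hx with rfl | hx'
        · exact Finset.mem_filter.mpr ⟨hpq, rfl⟩
        · rw [Finset.mem_singleton] at hx'
          subst hx'
          exact Finset.mem_filter.mpr ⟨hswap, Finset.pair_comm _ _⟩
      have hcard2 : ({pq, (pq.2, pq.1)} : Finset (Pt × Pt)).card = 2 := by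
        rw [Finset.card_insert_of_notMem (by simpa using hnepair), Finset.card_singleton]
      calc 2 = ({pq, (pq.2, pq.1)} : Finset (Pt × Pt)).card := hcard2.symm
        _ ≤ _ := Finset.card_le_card hsub
    calc (G.image _).card * 2 = (G.image _).card • 2 := by rw [smul_eq_mul]
      _ ≤ _ := Finset.card_nsmul_le_sum _ _ 2 h2
  -- step 4 : K is large
  set Kfull : Finset (ℕ × ℕ) := (Finset.range n ×ˢ Finset.range n).filter
      (fun p2 => p2.1 < p2.2) with hKfdef
  have hKsub : K ⊆ Kfull := by
    intro x hx
    obtain ⟨h1, h2, h3, h4⟩ := hKmem x hx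
    simp only [hKfdef, Finset.mem_filter, Finset.mem_product, Finset.mem_range]
    exact ⟨⟨h1, h2⟩, by omega⟩
  have hKfull2 : Kfull.card * 2 = n * (n - 1) := by
    have hmaps : ∀ x ∈ Kfull, x.2 ∈ Finset.range n := by
      intro x hx
      simp only [hKfdef, Finset.mem_filter, Finset.mem_product] at hx
      exact hx.1.2
    rw [Finset.card_eq_sum_card_fiberwise hmaps]
    have hfib : ∀ j ∈ Finset.range n, (Kfull.filter (fun p2 => p2.2 = j)).card = j := by
      intro j hj
      rw [Finset.mem_range] at hj
      have : Kfull.filter (fun p2 => p2.2 = j) = (Finset.range j).image (fun i => (i, j)) := by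
        ext x
        simp only [hKfdef, Finset.mem_filter, Finset.mem_product, Finset.mem_range,
          Finset.mem_image]
        constructor
        · rintro ⟨⟨⟨h1, h2⟩, h3⟩, h4⟩
          exact ⟨x.1, by omega, by rw [← h4]⟩
        · rintro ⟨i, hi, rfl⟩
          exact ⟨⟨⟨by omega, by omega⟩, by omega⟩, rfl⟩
      rw [this, Finset.card_image_of_injective _ (fun a b h => by simpa using congrArg Prod.fst h),
        Finset.card_range]
    rw [Finset.sum_congr rfl hfib]
    exact Finset.sum_range_id_mul_two n
  have hbadcard : (Kfull \ K).card ≤ 2 * n := by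
    have hbad : Kfull \ K ⊆ ((Finset.range (n - 1)).image (fun k => (k, k + 1))) ∪
        ((Finset.range (n - 2)).image (fun k => (k, k + 2))) ∪
        {(0, n - 2), (0, n - 1), (1, n - 1)} := by
      intro x hx
      rw [Finset.mem_sdiff] at hx
      obtain ⟨hxf, hxk⟩ := hx
      simp only [hKfdef, Finset.mem_filter, Finset.mem_product, Finset.mem_range] at hxf
      obtain ⟨⟨h1, h2⟩, h3⟩ := hxf
      have hxk' : ¬(x.1 + 3 ≤ x.2 ∧ x.2 + 3 ≤ x.1 + n) := by
        intro h
        exact hxk (by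
          simp only [hKdef, Finset.mem_filter, Finset.mem_product, Finset.mem_range]
          exact ⟨⟨h1, h2⟩, h⟩)
      rw [Finset.mem_union, Finset.mem_union]
      rcases (by omega : x.2 = x.1 + 1 ∨ x.2 = x.1 + 2 ∨
          ((x.1 = 0 ∧ x.2 = n - 2) ∨ (x.1 = 0 ∧ x.2 = n - 1) ∨ (x.1 = 1 ∧ x.2 = n - 1)))
        with h | h | h
      · refine Or.inl (Or.inl (Finset.mem_image.mpr ⟨x.1, Finset.mem_range.mpr (by omega), ?_⟩))
        rw [← h]
      · refine Or.inl (Or.inr (Finset.mem_image.mpr ⟨x.1, Finset.mem_range.mpr (by omega), ?_⟩))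
        rw [← h]
      · refine Or.inr ?_
        simp only [Finset.mem_insert, Finset.mem_singleton]
        rcases h with ⟨ha, hb⟩ | ⟨ha, hb⟩ | ⟨ha, hb⟩
        · exact Or.inl (Prod.ext_iff.mpr ⟨ha, hb⟩)
        · exact Or.inr (Or.inl (Prod.ext_iff.mpr ⟨ha, hb⟩))
        · exact Or.inr (Or.inr (Prod.ext_iff.mpr ⟨ha, hb⟩))
    refine le_trans (Finset.card_le_card hbad) ?_
    refine le_trans (Finset.card_union_le _ _) ?_
    have b1 : ((Finset.range (n - 1)).image (fun k => (k, k + 1))).card ≤ n - 1 :=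
      le_trans (Finset.card_image_le) (by rw [Finset.card_range])
    have b2 : ((Finset.range (n - 2)).image (fun k => (k, k + 2))).card ≤ n - 2 :=
      le_trans (Finset.card_image_le) (by rw [Finset.card_range])
    have b3 : ({(0, n - 2), (0, n - 1), (1, n - 1)} : Finset (ℕ × ℕ)).card ≤ 3 := by
      refine le_trans (Finset.card_insert_le _ _) ?_
      refine le_trans (Nat.add_le_add_right (Finset.card_insert_le _ _) 1) ?_
      simp
    refine le_trans (Nat.add_le_add (Finset.card_union_le _ _) le_rfl) ?_
    omega
  have hKbig : Kfull.card ≤ K.card + 2 * n := by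
    have := Finset.card_sdiff_add_card_eq_card hKsub
    omega
  -- put everything together over ℝ
  have c1 : (K.card : ℝ) ≤ 4 * ((K.image F).card : ℝ) := by
    exact_mod_cast step1
  have c2 : ((K.image F).card : ℝ) ≤
      ((G.image (fun pq : Pt × Pt => ({pq.1, pq.2} : Finset Pt))).card : ℝ) := by
    exact_mod_cast Finset.card_le_card step2
  have c3 : ((G.image (fun pq : Pt × Pt => ({pq.1, pq.2} : Finset Pt))).card : ℝ) * 2 ≤
      (G.card : ℝ) := by
    exact_mod_cast step3
  have c4 : (Kfull.card : ℝ) ≤ (K.card : ℝ) + 2 * n := by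
    exact_mod_cast hKbig
  have c5 : (Kfull.card : ℝ) * 2 = n * ((n : ℝ) - 1) := by
    have := hKfull2
    have hcast : ((Kfull.card * 2 : ℕ) : ℝ) = ((n * (n - 1) : ℕ) : ℝ) := by
      exact_mod_cast congrArg (Nat.cast : ℕ → ℝ) this
    push_cast [Nat.cast_sub (by omega : 1 ≤ n)] at hcast
    linarith
  linarith
end
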